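/- (Lemma 3.7, case (4,16).) For all nonnegative integers r and s, there exists a solution to HWP*(16; 4^r, 16^s) if and only if r + s = 15. -/

import Mathlib

/-!
Every factor of a solution sends a vertex `x` to exactly one vertex `y ≠ x`, and every such `y` is
reached from `x` by exactly one factor, so `i ↦ σᵢ x` is a bijection onto the `v - 1` other vertices
and `r + s = v - 1`. Conversely, once `i ↦ σᵢ x` is injective for each `x`, the same count makes it
bijective, so a solution of HWP*(16; 4^r, 16^(15-r)) only has to be exhibited and checked by
evaluation: the minimal period of a point is `2^k` as soon as its `2^k`-th iterate returns to it and
its `2^(k-1)`-th does not.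
-/

/-- A solution to the directed Hamilton–Waterloo problem HWP*(v; m^r, n^s):
a family of `r + s` permutations of `Fin v`, the first `r` of which are
fixed-point-free with all cycles of length `m` (i.e. every point has minimal
period `m`), the last `s` fixed-point-free with all cycles of length `n`,
such that for every ordered pair of distinct vertices `(x, y)` there is exactly
one index `i` with `σ i x = y`. -/
def HWPStarSolution (v m n r s : ℕ) : Prop :=
  ∃ σ : Fin (r + s) → Equiv.Perm (Fin v),
    (∀ i : Fin (r + s), (i : ℕ) < r → ∀ x : Fin v, Function.minimalPeriod ⇑(σ i) x = m) ∧
    (∀ i : Fin (r + s), r ≤ (i : ℕ) → ∀ x : Fin v, Function.minimalPeriod ⇑(σ i) x = n) ∧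
    (∀ x y : Fin v, x ≠ y → ∃! i : Fin (r + s), σ i x = y)

open Function

theorem existsUnique_apply_eq_iff_bijective {ι α : Type*} (σ : ι → α → α)
    (hσ : ∀ i x, σ i x ≠ x) :
    (∀ x y, x ≠ y → ∃! i, σ i x = y) ↔
      ∀ x, Bijective fun i => (⟨σ i x, hσ i x⟩ : {y // y ≠ x}) := by
  simp only [bijective_iff_existsUnique, Subtype.forall, Subtype.mk.injEq]
  exact forall_congr' fun x => forall_congr' fun y => imp_congr_left ne_comm

namespace HWPStarSolution

variable {v m n r s : ℕ}

theorem apply_ne_self {σ : Fin (r + s) → Fin v → Fin v} (hm : m ≠ 1) (hn : n ≠ 1)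
    (hσm : ∀ i : Fin (r + s), (i : ℕ) < r → ∀ x, minimalPeriod (σ i) x = m)
    (hσn : ∀ i : Fin (r + s), r ≤ (i : ℕ) → ∀ x, minimalPeriod (σ i) x = n)
    (i : Fin (r + s)) (x : Fin v) : σ i x ≠ x := by
  intro hx
  have h1 := minimalPeriod_eq_one_iff_isFixedPt.mpr hx
  rcases lt_or_ge (i : ℕ) r with hi | hi
  · exact hm (hσm i hi x ▸ h1)
  · exact hn (hσn i hi x ▸ h1)

theorem add_add_one_eq (hm : m ≠ 1) (hn : n ≠ 1) (hv : v ≠ 0)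
    (h : HWPStarSolution v m n r s) : r + s + 1 = v := by
  obtain ⟨σ, hσm, hσn, hσ⟩ := h
  have hfix := apply_ne_self (σ := fun i => σ i) hm hn hσm hσn
  have hbij := (existsUnique_apply_eq_iff_bijective _ hfix).mp hσ ⟨0, Nat.pos_of_ne_zero hv⟩
  have hcard := Fintype.card_of_bijective hbij
  rw [Fintype.card_fin, Fintype.card_subtype_compl, Fintype.card_fin, Fintype.card_unique] at hcard
  omega

theorem of_injective (σ : Fin (r + s) → Fin v → Fin v) (hv : r + s + 1 = v)
    (hm : 1 < m) (hn : 1 < n)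
    (hσm : ∀ i : Fin (r + s), (i : ℕ) < r → ∀ x, minimalPeriod (σ i) x = m)
    (hσn : ∀ i : Fin (r + s), r ≤ (i : ℕ) → ∀ x, minimalPeriod (σ i) x = n)
    (hcol : ∀ x, Injective fun i => σ i x) : HWPStarSolution v m n r s := by
  have hfix := apply_ne_self hm.ne' hn.ne' hσm hσn
  have hbij (i : Fin (r + s)) : Bijective (σ i) := by
    refine Finite.injective_iff_bijective.mp (injective_iff_periodicPts_eq_univ.mpr ?_)
    refine Set.eq_univ_of_forall fun x => minimalPeriod_pos_iff_mem_periodicPts.mp ?_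
    rcases lt_or_ge (i : ℕ) r with hi | hi
    · rw [hσm i hi x]; omega
    · rw [hσn i hi x]; omega
  refine ⟨fun i => Equiv.ofBijective _ (hbij i), hσm, hσn, ?_⟩
  refine (existsUnique_apply_eq_iff_bijective σ hfix).mpr fun x => ?_
  refine (Fintype.bijective_iff_injective_and_card _).mpr ⟨fun i j hij => hcol x ?_, ?_⟩
  · exact Subtype.ext_iff.mp hij
  · rw [Fintype.card_fin, Fintype.card_subtype_compl, Fintype.card_fin, Fintype.card_unique]
    omega

end HWPStarSolution

/-- `hwpStar16Table[r][i]` is the value table of the `i`-th factor of a solution of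
HWP*(16; 4^r, 16^(15-r)) found by computer search, the `r` factors made of 4-cycles first. -/
def hwpStar16Table : List (List (List (Fin 16))) :=
  [
    [[9, 3, 12, 14, 7, 6, 0, 1, 13, 2, 15, 10, 11, 5, 8, 4],
     [1, 4, 11, 12, 14, 13, 7, 15, 3, 6, 9, 0, 5, 2, 10, 8],
     [13, 12, 1, 15, 6, 9, 2, 5, 10, 0, 4, 8, 7, 3, 11, 14],
     [3, 15, 9, 7, 5, 8, 10, 11, 14, 13, 2, 6, 4, 1, 0, 12],
     [2, 6, 10, 9, 1, 0, 8, 14, 7, 12, 3, 13, 15, 4, 5, 11],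
     [5, 10, 7, 0, 2, 4, 15, 6, 11, 14, 13, 9, 3, 8, 12, 1],
     [4, 7, 6, 10, 11, 15, 12, 13, 0, 1, 5, 3, 8, 14, 2, 9],
     [11, 9, 8, 6, 12, 3, 13, 10, 4, 5, 1, 2, 14, 15, 7, 0],
     [8, 5, 15, 13, 3, 7, 14, 2, 9, 10, 11, 1, 0, 12, 4, 6],
     [15, 14, 5, 2, 13, 11, 4, 8, 1, 3, 0, 12, 6, 10, 9, 7],
     [14, 2, 0, 5, 8, 12, 1, 9, 15, 4, 6, 7, 10, 11, 13, 3],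
     [12, 0, 3, 11, 15, 2, 5, 4, 6, 7, 8, 14, 13, 9, 1, 10],
     [7, 13, 4, 8, 10, 1, 9, 3, 12, 11, 14, 15, 2, 0, 6, 5],
     [6, 8, 14, 4, 9, 10, 11, 0, 2, 15, 12, 5, 1, 7, 3, 13],
     [10, 11, 13, 1, 0, 14, 3, 12, 5, 8, 7, 4, 9, 6, 15, 2]],
    [[13, 15, 5, 10, 8, 9, 1, 6, 0, 11, 12, 2, 14, 4, 3, 7],
     [7, 11, 0, 13, 5, 6, 3, 15, 2, 1, 9, 4, 8, 12, 10, 14],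
     [5, 12, 1, 9, 6, 13, 10, 3, 14, 15, 2, 0, 7, 8, 4, 11],
     [8, 0, 14, 12, 11, 4, 2, 9, 15, 10, 1, 7, 13, 6, 5, 3],
     [14, 6, 8, 11, 15, 7, 0, 12, 5, 13, 3, 1, 4, 2, 9, 10],
     [6, 13, 10, 15, 3, 0, 7, 11, 1, 4, 5, 9, 2, 14, 12, 8],
     [11, 2, 4, 14, 7, 15, 12, 10, 3, 6, 8, 5, 0, 9, 13, 1],
     [9, 14, 12, 6, 2, 10, 11, 13, 7, 3, 4, 8, 1, 15, 0, 5],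
     [15, 10, 3, 0, 12, 2, 8, 4, 9, 5, 7, 14, 6, 11, 1, 13],
     [10, 7, 15, 2, 14, 1, 5, 8, 11, 0, 13, 12, 9, 3, 6, 4],
     [1, 8, 7, 4, 9, 3, 14, 0, 13, 2, 11, 6, 5, 10, 15, 12],
     [12, 9, 11, 1, 13, 8, 4, 5, 10, 7, 14, 15, 3, 0, 2, 6],
     [3, 5, 6, 7, 10, 14, 9, 2, 4, 12, 15, 13, 11, 1, 8, 0],
     [4, 3, 9, 5, 1, 12, 13, 14, 6, 8, 0, 10, 15, 7, 11, 2],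
     [2, 4, 13, 8, 0, 11, 15, 1, 12, 14, 6, 3, 10, 5, 7, 9]],
    [[5, 14, 6, 13, 15, 10, 3, 1, 11, 0, 9, 4, 7, 2, 12, 8],
     [12, 3, 13, 2, 7, 11, 9, 0, 10, 8, 6, 15, 4, 1, 5, 14],
     [13, 0, 11, 7, 6, 2, 8, 9, 5, 1, 14, 12, 3, 10, 15, 4],
     [4, 15, 10, 6, 1, 12, 11, 5, 14, 7, 13, 8, 0, 3, 9, 2],
     [2, 12, 8, 5, 10, 0, 13, 14, 6, 15, 1, 9, 11, 4, 3, 7],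
     [10, 6, 7, 9, 13, 3, 5, 11, 12, 14, 4, 0, 2, 15, 8, 1],
     [11, 10, 4, 8, 14, 6, 0, 12, 13, 3, 15, 2, 5, 7, 1, 9],
     [8, 2, 12, 1, 5, 9, 15, 10, 4, 13, 3, 7, 6, 14, 11, 0],
     [1, 5, 9, 4, 8, 14, 7, 2, 15, 10, 11, 3, 13, 0, 6, 12],
     [6, 7, 3, 0, 11, 13, 14, 15, 1, 2, 8, 10, 9, 12, 4, 5],
     [7, 8, 5, 11, 2, 1, 12, 4, 3, 6, 0, 14, 15, 9, 13, 10],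
     [14, 13, 0, 10, 12, 15, 4, 6, 9, 11, 2, 1, 8, 5, 7, 3],
     [15, 9, 14, 12, 3, 8, 1, 13, 2, 4, 7, 5, 10, 11, 0, 6],
     [9, 11, 15, 14, 0, 4, 2, 3, 7, 12, 5, 6, 1, 8, 10, 13],
     [3, 4, 1, 15, 9, 7, 10, 8, 0, 5, 12, 13, 14, 6, 2, 11]],
    [[5, 13, 3, 15, 11, 10, 0, 8, 9, 14, 6, 1, 2, 4, 7, 12],
     [9, 2, 14, 1, 5, 7, 4, 6, 11, 15, 0, 12, 13, 8, 3, 10],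
     [11, 8, 7, 9, 6, 12, 15, 1, 2, 0, 13, 3, 10, 5, 4, 14],
     [8, 4, 11, 0, 7, 15, 5, 12, 13, 6, 2, 9, 14, 1, 10, 3],
     [15, 5, 10, 2, 0, 9, 8, 14, 12, 11, 1, 4, 3, 6, 13, 7],
     [6, 15, 0, 10, 2, 3, 1, 13, 5, 7, 4, 8, 11, 14, 12, 9],
     [12, 9, 15, 6, 10, 11, 14, 5, 4, 8, 3, 0, 1, 7, 2, 13],
     [13, 7, 12, 14, 3, 4, 9, 10, 6, 1, 15, 2, 8, 11, 0, 5],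
     [14, 10, 13, 4, 1, 0, 2, 15, 7, 3, 5, 6, 9, 12, 8, 11],
     [4, 12, 6, 5, 13, 14, 11, 2, 1, 10, 8, 15, 7, 3, 9, 0],
     [3, 0, 8, 13, 9, 1, 7, 11, 10, 5, 12, 14, 6, 2, 15, 4],
     [7, 14, 1, 12, 15, 8, 10, 9, 3, 2, 11, 13, 4, 0, 5, 6],
     [10, 6, 9, 11, 12, 2, 3, 4, 0, 13, 14, 7, 5, 15, 1, 8],
     [2, 3, 4, 7, 8, 6, 13, 0, 14, 12, 9, 5, 15, 10, 11, 1],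
     [1, 11, 5, 8, 14, 13, 12, 3, 15, 4, 7, 10, 0, 9, 6, 2]],
    [[15, 3, 8, 13, 12, 1, 9, 4, 0, 14, 6, 7, 11, 5, 10, 2],
     [8, 2, 6, 5, 7, 14, 12, 13, 11, 4, 0, 10, 1, 9, 15, 3],
     [14, 9, 12, 4, 11, 13, 2, 6, 3, 10, 15, 8, 7, 0, 5, 1],
     [6, 15, 11, 14, 5, 10, 1, 3, 4, 7, 8, 12, 13, 2, 9, 0],
     [1, 14, 15, 10, 8, 4, 7, 11, 6, 5, 2, 13, 0, 12, 3, 9],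
     [12, 8, 3, 1, 2, 7, 0, 14, 13, 15, 5, 4, 9, 10, 6, 11],
     [10, 12, 5, 2, 13, 15, 8, 0, 9, 1, 4, 3, 14, 6, 11, 7],
     [2, 11, 4, 12, 3, 6, 10, 5, 7, 0, 9, 14, 15, 1, 8, 13],
     [4, 7, 1, 15, 10, 2, 3, 9, 14, 12, 13, 5, 6, 11, 0, 8],
     [9, 4, 13, 8, 6, 0, 5, 1, 10, 11, 14, 15, 2, 3, 7, 12],
     [11, 0, 10, 6, 14, 8, 13, 12, 15, 2, 3, 9, 5, 7, 1, 4],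
     [13, 10, 9, 0, 15, 3, 11, 2, 5, 8, 7, 1, 4, 14, 12, 6],
     [3, 5, 0, 7, 9, 12, 4, 8, 1, 13, 11, 6, 10, 15, 2, 14],
     [7, 6, 14, 11, 1, 9, 15, 10, 2, 3, 12, 0, 8, 4, 13, 5],
     [5, 13, 7, 9, 0, 11, 14, 15, 12, 6, 1, 2, 3, 8, 4, 10]],
    [[5, 14, 6, 13, 15, 10, 3, 1, 11, 0, 9, 4, 7, 2, 12, 8],
     [12, 3, 13, 2, 7, 11, 9, 0, 10, 8, 6, 15, 4, 1, 5, 14],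
     [13, 15, 9, 11, 6, 3, 1, 5, 2, 12, 14, 7, 8, 10, 0, 4],
     [4, 5, 3, 10, 9, 6, 15, 8, 12, 13, 11, 2, 14, 0, 7, 1],
     [6, 0, 5, 4, 12, 13, 8, 9, 1, 10, 15, 3, 11, 14, 2, 7],
     [2, 9, 7, 15, 11, 12, 14, 13, 0, 3, 8, 10, 1, 5, 4, 6],
     [9, 11, 0, 14, 1, 15, 7, 4, 3, 5, 2, 13, 6, 8, 10, 12],
     [10, 7, 11, 1, 13, 0, 12, 15, 5, 6, 4, 14, 3, 9, 8, 2],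
     [15, 2, 14, 0, 8, 9, 10, 3, 6, 7, 1, 12, 5, 4, 11, 13],
     [3, 12, 8, 6, 2, 1, 4, 14, 9, 11, 13, 5, 10, 7, 15, 0],
     [11, 10, 1, 8, 3, 4, 2, 6, 7, 14, 0, 9, 15, 12, 13, 5],
     [8, 13, 15, 7, 10, 14, 5, 2, 4, 1, 12, 0, 9, 6, 3, 11],
     [7, 8, 12, 5, 14, 2, 0, 10, 15, 4, 3, 1, 13, 11, 6, 9],
     [14, 6, 4, 9, 0, 7, 11, 12, 13, 15, 5, 8, 2, 3, 1, 10],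
     [1, 4, 10, 12, 5, 8, 13, 11, 14, 2, 7, 6, 0, 15, 9, 3]],
    [[1, 8, 14, 12, 11, 4, 0, 3, 6, 7, 2, 13, 9, 5, 15, 10],
     [5, 3, 9, 4, 8, 6, 11, 15, 1, 12, 7, 0, 14, 10, 2, 13],
     [4, 5, 8, 2, 9, 13, 10, 6, 14, 15, 11, 7, 1, 12, 3, 0],
     [11, 13, 12, 14, 3, 15, 1, 4, 10, 6, 0, 8, 5, 9, 7, 2],
     [6, 15, 11, 13, 0, 7, 12, 14, 2, 8, 5, 9, 4, 1, 10, 3],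
     [7, 12, 5, 15, 2, 9, 3, 13, 0, 4, 1, 10, 11, 8, 6, 14],
     [9, 10, 1, 6, 14, 12, 15, 0, 13, 11, 4, 3, 2, 7, 8, 5],
     [2, 4, 3, 8, 7, 14, 13, 12, 9, 5, 15, 6, 10, 0, 1, 11],
     [15, 7, 6, 0, 10, 2, 9, 11, 5, 3, 8, 14, 13, 4, 12, 1],
     [10, 6, 15, 5, 13, 11, 7, 9, 4, 2, 3, 1, 8, 14, 0, 12],
     [8, 0, 13, 7, 1, 10, 4, 2, 11, 14, 6, 12, 3, 15, 5, 9],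
     [12, 11, 7, 10, 5, 1, 14, 8, 3, 0, 13, 2, 15, 6, 9, 4],
     [14, 2, 10, 9, 15, 3, 8, 5, 7, 1, 12, 4, 0, 11, 13, 6],
     [3, 14, 4, 1, 6, 0, 5, 10, 12, 13, 9, 15, 7, 2, 11, 8],
     [13, 9, 0, 11, 12, 8, 2, 1, 15, 10, 14, 5, 6, 3, 4, 7]],
    [[1, 8, 14, 12, 11, 4, 0, 3, 6, 7, 2, 13, 9, 5, 15, 10],
     [5, 3, 9, 4, 8, 6, 11, 15, 1, 12, 7, 0, 14, 10, 2, 13],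
     [4, 5, 8, 2, 9, 13, 10, 6, 14, 15, 11, 7, 1, 12, 3, 0],
     [11, 13, 12, 14, 3, 15, 1, 4, 10, 6, 0, 8, 5, 9, 7, 2],
     [6, 15, 11, 13, 0, 7, 12, 14, 2, 8, 5, 9, 4, 1, 10, 3],
     [7, 12, 5, 15, 2, 9, 3, 13, 0, 4, 1, 10, 11, 8, 6, 14],
     [9, 6, 13, 0, 7, 1, 15, 10, 4, 11, 8, 3, 2, 14, 12, 5],
     [15, 10, 4, 1, 13, 14, 7, 5, 11, 2, 12, 6, 8, 3, 0, 9],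
     [14, 0, 6, 10, 1, 12, 5, 2, 9, 13, 4, 15, 3, 7, 11, 8],
     [2, 11, 3, 6, 12, 8, 4, 1, 15, 5, 9, 14, 10, 0, 13, 7],
     [12, 14, 10, 5, 15, 11, 8, 9, 7, 0, 3, 1, 13, 2, 4, 6],
     [13, 4, 1, 11, 5, 0, 14, 8, 3, 10, 15, 2, 7, 6, 9, 12],
     [3, 7, 0, 9, 10, 2, 13, 12, 5, 1, 14, 4, 6, 15, 8, 11],
     [10, 2, 7, 8, 6, 3, 9, 0, 12, 14, 13, 5, 15, 11, 1, 4],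
     [8, 9, 15, 7, 14, 10, 2, 11, 13, 3, 6, 12, 0, 4, 5, 1]],
    [[14, 8, 13, 15, 10, 12, 9, 11, 7, 2, 5, 1, 4, 6, 3, 0],
     [13, 2, 12, 9, 0, 11, 15, 5, 1, 6, 7, 10, 8, 14, 4, 3],
     [10, 11, 4, 13, 8, 7, 2, 1, 6, 0, 14, 5, 3, 15, 9, 12],
     [12, 9, 10, 2, 11, 1, 0, 4, 3, 13, 8, 14, 15, 5, 7, 6],
     [2, 10, 14, 8, 5, 3, 12, 9, 4, 11, 6, 15, 1, 0, 13, 7],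
     [3, 5, 7, 14, 6, 9, 10, 8, 13, 15, 11, 4, 0, 2, 12, 1],
     [7, 12, 3, 6, 2, 10, 4, 15, 0, 14, 9, 13, 11, 1, 5, 8],
     [1, 7, 11, 0, 13, 15, 5, 3, 12, 10, 4, 8, 2, 9, 6, 14],
     [9, 13, 1, 4, 14, 0, 8, 12, 11, 7, 3, 2, 6, 10, 15, 5],
     [11, 6, 15, 10, 12, 8, 13, 0, 14, 5, 2, 3, 7, 4, 1, 9],
     [15, 4, 6, 5, 7, 2, 11, 13, 9, 1, 12, 0, 14, 3, 8, 10],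
     [5, 15, 8, 1, 9, 6, 3, 14, 10, 12, 0, 7, 13, 11, 2, 4],
     [8, 0, 9, 12, 1, 4, 14, 2, 15, 3, 13, 6, 5, 7, 10, 11],
     [6, 3, 5, 11, 15, 14, 7, 10, 2, 4, 1, 12, 9, 8, 0, 13],
     [4, 14, 0, 7, 3, 13, 1, 6, 5, 8, 15, 9, 10, 12, 11, 2]],
    [[11, 12, 9, 13, 1, 2, 15, 4, 10, 14, 6, 3, 7, 0, 5, 8],
     [8, 2, 10, 4, 11, 15, 14, 5, 6, 7, 12, 13, 1, 3, 0, 9],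
     [4, 11, 6, 14, 9, 3, 12, 15, 5, 10, 0, 7, 13, 2, 8, 1],
     [6, 5, 3, 12, 10, 0, 1, 11, 15, 2, 7, 4, 9, 8, 13, 14],
     [9, 6, 15, 1, 12, 14, 8, 0, 3, 13, 5, 10, 2, 7, 11, 4],
     [3, 10, 13, 7, 14, 6, 11, 9, 2, 0, 4, 15, 8, 12, 1, 5],
     [2, 3, 1, 0, 5, 10, 13, 8, 12, 11, 14, 6, 15, 9, 4, 7],
     [5, 13, 7, 8, 2, 9, 4, 6, 14, 12, 11, 1, 0, 10, 15, 3],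
     [7, 9, 8, 5, 0, 1, 10, 13, 11, 3, 15, 14, 6, 4, 2, 12],
     [14, 7, 4, 6, 15, 8, 2, 12, 0, 1, 3, 9, 5, 11, 10, 13],
     [10, 14, 11, 15, 7, 12, 0, 1, 9, 6, 13, 8, 4, 5, 3, 2],
     [12, 15, 14, 10, 8, 4, 7, 3, 13, 5, 9, 2, 11, 1, 6, 0],
     [15, 0, 5, 2, 13, 7, 3, 10, 1, 4, 8, 12, 14, 6, 9, 11],
     [1, 4, 0, 11, 3, 13, 9, 14, 7, 8, 2, 5, 10, 15, 12, 6],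
     [13, 8, 12, 9, 6, 11, 5, 2, 4, 15, 1, 0, 3, 14, 7, 10]],
    [[5, 10, 13, 0, 12, 15, 7, 1, 11, 14, 6, 4, 8, 9, 2, 3],
     [12, 7, 10, 15, 8, 2, 14, 13, 6, 5, 9, 1, 3, 11, 4, 0],
     [11, 2, 5, 14, 9, 10, 0, 6, 13, 15, 1, 7, 4, 3, 8, 12],
     [7, 0, 9, 5, 14, 6, 11, 12, 10, 8, 2, 3, 1, 15, 13, 4],
     [3, 11, 15, 4, 10, 12, 8, 2, 1, 13, 0, 6, 9, 5, 7, 14],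
     [6, 12, 3, 8, 7, 1, 13, 11, 15, 4, 5, 9, 10, 14, 0, 2],
     [15, 8, 4, 7, 1, 14, 9, 5, 2, 0, 12, 13, 11, 10, 3, 6],
     [10, 13, 1, 12, 2, 0, 3, 9, 7, 11, 15, 8, 14, 4, 6, 5],
     [4, 15, 0, 1, 11, 13, 12, 8, 14, 3, 7, 2, 5, 6, 10, 9],
     [9, 5, 8, 13, 0, 11, 4, 10, 3, 6, 14, 15, 7, 2, 12, 1],
     [8, 3, 14, 2, 6, 9, 10, 4, 5, 12, 13, 0, 15, 1, 11, 7],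
     [13, 6, 12, 10, 3, 4, 2, 14, 9, 1, 8, 5, 0, 7, 15, 11],
     [2, 14, 7, 6, 5, 3, 1, 15, 4, 10, 11, 12, 13, 0, 9, 8],
     [14, 9, 6, 11, 15, 8, 5, 3, 0, 7, 4, 10, 2, 12, 1, 13],
     [1, 4, 11, 9, 13, 7, 15, 0, 12, 2, 3, 14, 6, 8, 5, 10]],
    [[14, 11, 7, 8, 6, 13, 15, 3, 2, 1, 9, 10, 4, 0, 5, 12],
     [5, 6, 12, 4, 1, 15, 3, 8, 10, 2, 13, 0, 14, 7, 9, 11],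
     [9, 8, 1, 10, 12, 0, 5, 11, 13, 6, 4, 15, 3, 2, 7, 14],
     [10, 3, 8, 9, 13, 11, 14, 1, 5, 7, 12, 2, 15, 6, 4, 0],
     [7, 5, 6, 2, 9, 14, 8, 4, 3, 0, 11, 13, 1, 15, 12, 10],
     [4, 9, 3, 11, 10, 6, 7, 15, 0, 14, 8, 12, 2, 1, 13, 5],
     [2, 15, 4, 0, 3, 7, 12, 6, 1, 10, 14, 9, 5, 8, 11, 13],
     [13, 14, 10, 1, 11, 2, 0, 5, 9, 4, 7, 8, 6, 12, 15, 3],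
     [15, 13, 5, 14, 0, 10, 2, 9, 4, 12, 6, 7, 11, 3, 1, 8],
     [3, 12, 0, 7, 15, 4, 11, 2, 6, 5, 1, 14, 13, 10, 8, 9],
     [8, 0, 9, 6, 5, 3, 4, 12, 11, 13, 15, 1, 10, 14, 2, 7],
     [1, 7, 11, 13, 8, 9, 10, 14, 12, 15, 3, 4, 0, 5, 6, 2],
     [11, 10, 14, 15, 2, 12, 9, 13, 7, 3, 5, 6, 8, 4, 0, 1],
     [6, 2, 13, 12, 14, 8, 1, 10, 15, 11, 0, 5, 7, 9, 3, 4],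
     [12, 4, 15, 5, 7, 1, 13, 0, 14, 8, 2, 3, 9, 11, 10, 6]],
    [[2, 5, 1, 15, 13, 0, 9, 6, 11, 14, 8, 12, 10, 3, 7, 4],
     [10, 13, 6, 14, 12, 1, 15, 11, 5, 2, 7, 0, 3, 8, 4, 9],
     [3, 0, 7, 4, 1, 10, 11, 13, 15, 8, 6, 5, 2, 12, 9, 14],
     [12, 9, 14, 6, 11, 8, 4, 10, 2, 15, 0, 3, 7, 1, 5, 13],
     [7, 6, 12, 9, 0, 15, 5, 8, 4, 10, 14, 13, 11, 2, 3, 1],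
     [15, 2, 10, 12, 7, 14, 13, 3, 9, 0, 11, 1, 4, 5, 6, 8],
     [6, 15, 5, 1, 8, 11, 12, 2, 13, 4, 3, 7, 14, 9, 0, 10],
     [8, 14, 4, 13, 5, 6, 2, 1, 3, 11, 12, 10, 9, 0, 15, 7],
     [11, 10, 0, 7, 2, 9, 8, 5, 12, 3, 13, 4, 15, 14, 1, 6],
     [14, 3, 15, 11, 9, 2, 10, 0, 1, 6, 4, 8, 5, 7, 13, 12],
     [4, 8, 13, 5, 10, 12, 3, 9, 7, 1, 15, 14, 6, 11, 2, 0],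
     [1, 12, 9, 10, 3, 4, 7, 14, 0, 13, 5, 6, 8, 15, 11, 2],
     [5, 4, 3, 0, 15, 13, 14, 12, 10, 7, 9, 2, 1, 6, 8, 11],
     [9, 11, 8, 2, 14, 7, 0, 4, 6, 5, 1, 15, 13, 10, 12, 3],
     [13, 7, 11, 8, 6, 3, 1, 15, 14, 12, 2, 9, 0, 4, 10, 5]],
    [[1, 11, 13, 4, 9, 6, 7, 10, 2, 12, 5, 15, 3, 14, 8, 0],
     [5, 8, 0, 11, 15, 7, 10, 2, 13, 1, 14, 4, 6, 9, 12, 3],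
     [2, 15, 5, 14, 0, 4, 1, 3, 12, 7, 13, 6, 10, 8, 9, 11],
     [3, 9, 7, 5, 12, 14, 15, 8, 11, 6, 4, 2, 13, 10, 0, 1],
     [6, 12, 11, 0, 5, 1, 8, 14, 3, 13, 9, 7, 4, 15, 2, 10],
     [15, 3, 9, 10, 8, 13, 4, 0, 14, 5, 11, 1, 7, 2, 6, 12],
     [8, 4, 12, 15, 11, 2, 3, 6, 9, 10, 0, 13, 14, 1, 5, 7],
     [13, 5, 3, 6, 10, 8, 12, 1, 7, 0, 15, 9, 2, 11, 4, 14],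
     [10, 0, 6, 1, 2, 11, 13, 15, 5, 14, 3, 12, 8, 4, 7, 9],
     [14, 10, 1, 7, 13, 3, 2, 11, 0, 4, 6, 5, 9, 12, 15, 8],
     [11, 14, 4, 9, 3, 15, 0, 5, 6, 2, 12, 8, 1, 7, 10, 13],
     [9, 2, 8, 13, 1, 0, 14, 12, 4, 15, 7, 10, 11, 6, 3, 5],
     [4, 6, 10, 12, 7, 9, 11, 13, 15, 3, 8, 14, 5, 0, 1, 2],
     [7, 13, 15, 2, 14, 12, 9, 4, 10, 8, 1, 3, 0, 5, 11, 6],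
     [12, 7, 14, 8, 6, 10, 5, 9, 1, 11, 2, 0, 15, 3, 13, 4]],
    [[10, 5, 15, 0, 14, 11, 12, 13, 3, 1, 8, 9, 4, 2, 6, 7],
     [7, 11, 12, 2, 8, 13, 15, 1, 6, 3, 5, 0, 9, 14, 10, 4],
     [2, 9, 8, 13, 1, 4, 10, 15, 12, 5, 7, 14, 0, 11, 3, 6],
     [8, 7, 3, 1, 11, 0, 13, 2, 14, 4, 12, 15, 6, 10, 5, 9],
     [1, 15, 11, 8, 7, 2, 14, 3, 4, 10, 6, 12, 5, 0, 9, 13],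
     [6, 14, 5, 4, 12, 1, 9, 0, 10, 7, 15, 8, 13, 3, 2, 11],
     [15, 13, 0, 5, 3, 14, 8, 12, 9, 11, 2, 6, 1, 7, 4, 10],
     [13, 0, 9, 15, 10, 3, 1, 4, 5, 12, 14, 2, 11, 6, 7, 8],
     [11, 12, 7, 10, 15, 6, 0, 9, 2, 8, 4, 5, 14, 1, 13, 3],
     [12, 10, 4, 11, 0, 8, 3, 6, 13, 14, 9, 7, 2, 15, 1, 5],
     [4, 6, 10, 14, 13, 15, 2, 5, 11, 0, 1, 3, 7, 9, 8, 12],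
     [9, 3, 6, 12, 2, 7, 11, 10, 1, 15, 13, 4, 8, 5, 0, 14],
     [14, 8, 13, 6, 9, 10, 5, 11, 7, 2, 3, 1, 15, 4, 12, 0],
     [3, 2, 14, 7, 5, 9, 4, 8, 0, 6, 11, 13, 10, 12, 15, 1],
     [5, 4, 1, 9, 6, 12, 7, 14, 15, 13, 0, 10, 3, 8, 11, 2]],
    [[5, 7, 1, 0, 2, 6, 3, 4, 13, 15, 9, 8, 10, 14, 11, 12],
     [4, 5, 0, 6, 7, 3, 1, 2, 12, 13, 8, 14, 15, 11, 9, 10],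
     [3, 6, 7, 5, 0, 4, 2, 1, 11, 14, 15, 13, 8, 12, 10, 9],
     [1, 4, 3, 7, 6, 2, 0, 5, 9, 12, 11, 15, 14, 10, 8, 13],
     [2, 3, 6, 4, 5, 1, 7, 0, 10, 11, 14, 12, 13, 9, 15, 8],
     [6, 0, 5, 2, 1, 7, 4, 3, 14, 8, 13, 10, 9, 15, 12, 11],
     [7, 2, 4, 1, 3, 0, 5, 6, 15, 10, 12, 9, 11, 8, 13, 14],
     [8, 9, 10, 11, 12, 13, 14, 15, 4, 5, 6, 7, 0, 1, 2, 3],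
     [12, 13, 14, 15, 8, 9, 10, 11, 0, 1, 2, 3, 4, 5, 6, 7],
     [9, 10, 11, 12, 13, 14, 15, 8, 3, 4, 5, 6, 7, 0, 1, 2],
     [13, 14, 15, 8, 9, 10, 11, 12, 7, 0, 1, 2, 3, 4, 5, 6],
     [10, 11, 12, 13, 14, 15, 8, 9, 2, 3, 4, 5, 6, 7, 0, 1],
     [14, 15, 8, 9, 10, 11, 12, 13, 6, 7, 0, 1, 2, 3, 4, 5],
     [11, 12, 13, 14, 15, 8, 9, 10, 1, 2, 3, 4, 5, 6, 7, 0],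
     [15, 8, 9, 10, 11, 12, 13, 14, 5, 6, 7, 0, 1, 2, 3, 4]]]

def hwpStar16Factor (r i : ℕ) (x : Fin 16) : Fin 16 :=
  ((hwpStar16Table.getD r []).getD i []).getD x 0

theorem hwpStar16Factor_isPeriodicPt : ∀ r < 16, ∀ i < 15, ∀ x : Fin 16,
    if i < r then
      IsPeriodicPt (hwpStar16Factor r i) (2 ^ 2) x ∧ ¬IsPeriodicPt (hwpStar16Factor r i) (2 ^ 1) x
    else
      IsPeriodicPt (hwpStar16Factor r i) (2 ^ 4) x ∧ ¬IsPeriodicPt (hwpStar16Factor r i) (2 ^ 3) x := by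
  decide

theorem hwpStar16Factor_injective : ∀ r < 16, ∀ x : Fin 16, ∀ i < 15, ∀ j < 15,
    hwpStar16Factor r i x = hwpStar16Factor r j x → i = j := by
  decide

theorem minimalPeriod_hwpStar16Factor {r i : ℕ} (hr : r < 16) (hi : i < 15) (x : Fin 16) :
    minimalPeriod (hwpStar16Factor r i) x = if i < r then 4 else 16 := by
  have h := hwpStar16Factor_isPeriodicPt r hr i hi x
  split_ifs at h ⊢ <;> exact minimalPeriod_eq_prime_pow h.2 h.1

/-- HWP*(16; 4^r, 16^s) has a solution if and only if r + s = 15. -/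
theorem hwpStar_16_4_16 (r s : ℕ) :
    HWPStarSolution 16 4 16 r s ↔ r + s = 15 := by
  refine ⟨fun h => ?_, fun h => ?_⟩
  · have := h.add_add_one_eq (by norm_num) (by norm_num) (by norm_num)
    omega
  · refine .of_injective (fun i => hwpStar16Factor r i) (by omega) (by norm_num) (by norm_num)
      (fun i hi x => ?_) (fun i hi x => ?_) (fun x i j hij => ?_)
    · rw [minimalPeriod_hwpStar16Factor (by omega) (by omega), if_pos hi]
    · rw [minimalPeriod_hwpStar16Factor (by omega) (by omega), if_neg (by omega)]
    · exact Fin.ext (hwpStar16Factor_injective r (by omega) x i (by omega) j (by omega) hij)
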